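/- Let f : ℝ → ℝ be strictly increasing and C^{1+α} on an interval [u, w] (for some α > 0), with Df bounded below by a positive constant c1 and the α-Hölder constant of Df bounded by M on [u,w]. Then for any points u ≤ z1 < z2 < z3 < z4 ≤ w, |Dist(z1,z2,z3,z4;f) - 1| ≤ K (z4-z1)^α, where K depends only on c1, M and w - u. -/

import Mathlib

/-!
By the mean value theorem each difference quotient in the cross-ratio of `f` is a value `f' ξ`
at a point of `[z1, z4]`, so `Dist = f' A f' B / (f' C f' D)` with `A, C` and `B, D` at distance
at most `z4 - z1`. Hölder continuity makes `f' A - f' C` and `f' B - f' D` of size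
`M (z4 - z1)^α`, and the bounds `c1 ≤ f' ≤ f' u + M (w - u)^α` turn this into the estimate.
-/

noncomputable def Cr (a1 a2 a3 a4 : ℝ) : ℝ :=
  ((a2 - a1) * (a4 - a3)) / ((a3 - a1) * (a4 - a2))

noncomputable def crDist (a1 a2 a3 a4 : ℝ) (f : ℝ → ℝ) : ℝ :=
  Cr (f a1) (f a2) (f a3) (f a4) / Cr a1 a2 a3 a4

open Set

lemma crDist_eq_slope (f : ℝ → ℝ) {z1 z2 z3 z4 : ℝ} (h12 : z1 ≠ z2) (h13 : z1 ≠ z3)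
    (h24 : z2 ≠ z4) (h34 : z3 ≠ z4) :
    crDist z1 z2 z3 z4 f =
      slope f z1 z2 * slope f z3 z4 / (slope f z1 z3 * slope f z2 z4) := by
  have hsub : ∀ a b, f b - f a = slope f a b * (b - a) := fun a b => by
    rw [mul_comm, ← smul_eq_mul, sub_smul_slope, vsub_eq_sub]
  have hcr : Cr z1 z2 z3 z4 ≠ 0 := by
    unfold Cr
    have := sub_ne_zero.2 h12.symm
    have := sub_ne_zero.2 h13.symm
    have := sub_ne_zero.2 h24.symm
    have := sub_ne_zero.2 h34.symm
    positivity
  rw [crDist, Cr, hsub z1 z2, hsub z3 z4, hsub z1 z3, hsub z2 z4, mul_mul_mul_comm,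
    mul_mul_mul_comm (slope f z1 z3), mul_div_mul_comm, ← Cr, mul_div_assoc, div_self hcr,
    mul_one]

lemma exists_mem_Ioo_slope_eq_of_hasDerivWithinAt {f f' : ℝ → ℝ} {a b : ℝ} (hab : a < b)
    (hf : ∀ x ∈ Icc a b, HasDerivWithinAt f (f' x) (Icc a b) x) :
    ∃ c ∈ Ioo a b, slope f a b = f' c := by
  obtain ⟨c, hc, h⟩ := exists_hasDerivAt_eq_slope f f' hab
    (fun x hx => (hf x hx).continuousWithinAt)
    (fun x hx => (hf x (Ioo_subset_Icc_self hx)).hasDerivAt (Icc_mem_nhds hx.1 hx.2))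
  exact ⟨c, hc, by rw [slope_def_field, h]⟩

lemma abs_sub_le_of_holder_of_mem_Icc {g : ℝ → ℝ} {s : Set ℝ} {M α : ℝ} (hM : 0 ≤ M)
    (hα : 0 ≤ α) (hg : ∀ x ∈ s, ∀ y ∈ s, |g x - g y| ≤ M * |x - y| ^ α) {a b : ℝ}
    (hs : Icc a b ⊆ s) {x y : ℝ} (hx : x ∈ Icc a b) (hy : y ∈ Icc a b) :
    |g x - g y| ≤ M * (b - a) ^ α := by
  refine (hg x (hs hx) y (hs hy)).trans ?_
  have : |x - y| ≤ b - a := abs_sub_le_iff.2 ⟨by linarith [hx.2, hy.1], by linarith [hx.1, hy.2]⟩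
  gcongr

lemma abs_mul_div_mul_sub_one_le {a b c d m L δ : ℝ} (hm : 0 < m) (hc : m ≤ c) (hd : m ≤ d)
    (hb : |b| ≤ L) (hcL : c ≤ L) (hac : |a - c| ≤ δ) (hbd : |b - d| ≤ δ) :
    |a * b / (c * d) - 1| ≤ 2 * L * δ / m ^ 2 := by
  have hcd : m ^ 2 ≤ c * d := by rw [sq]; exact mul_le_mul hc hd hm.le (hm.le.trans hc)
  have hcd_pos : 0 < c * d := (by positivity : (0 : ℝ) < m ^ 2).trans_le hcd
  have hnum : |a * b - c * d| ≤ 2 * L * δ :=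
    calc |a * b - c * d| = |(a - c) * b + c * (b - d)| := by ring_nf
      _ ≤ |a - c| * |b| + |c| * |b - d| := by
        rw [← abs_mul, ← abs_mul]; exact abs_add_le _ _
      _ ≤ δ * L + L * δ := by
        rw [abs_of_pos (hm.trans_le hc)]
        gcongr
        · exact (abs_nonneg _).trans hac
        · exact (hm.trans_le (hc.trans hcL)).le
      _ = 2 * L * δ := by ring
  rw [div_sub_one hcd_pos.ne', abs_div, abs_of_pos hcd_pos]
  exact div_le_div₀ ((abs_nonneg _).trans hnum) hnum (by positivity) hcd

theorem cross_ratio_distortion_smooth_estimate_general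
    (f f' : ℝ → ℝ) (u w : ℝ) (huw : u < w)
    (α : ℝ) (hα : 0 < α)
    (c1 M : ℝ) (hc1 : 0 < c1) (hM : 0 ≤ M)
    (hderiv : ∀ x ∈ Set.Icc u w, HasDerivWithinAt f (f' x) (Set.Icc u w) x)
    (hlow : ∀ x ∈ Set.Icc u w, c1 ≤ f' x)
    (hHolder : ∀ x ∈ Set.Icc u w, ∀ y ∈ Set.Icc u w, |f' x - f' y| ≤ M * |x - y| ^ α) :
    ∃ K > 0, ∀ z1 z2 z3 z4 : ℝ,
      u ≤ z1 → z1 < z2 → z2 < z3 → z3 < z4 → z4 ≤ w →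
      |crDist z1 z2 z3 z4 f - 1| ≤ K * (z4 - z1) ^ α := by
  set L := f' u + M * (w - u) ^ α
  have hu : u ∈ Icc u w := left_mem_Icc.2 huw.le
  have hup : ∀ x ∈ Icc u w, f' x ≤ L := fun x hx => by
    linarith [(abs_le.1 (abs_sub_le_of_holder_of_mem_Icc hM hα.le hHolder subset_rfl hx hu)).2]
  have hL : 0 < L := hc1.trans_le ((hlow u hu).trans (hup u hu))
  refine ⟨2 * L * M / c1 ^ 2 + 1, by positivity, ?_⟩
  intro z1 z2 z3 z4 h1 h12 h23 h34 h4
  have hsub : Icc z1 z4 ⊆ Icc u w := Icc_subset_Icc h1 h4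
  have hslope : ∀ a b, z1 ≤ a → a < b → b ≤ z4 → ∃ ξ ∈ Icc z1 z4, slope f a b = f' ξ := by
    intro a b ha hab hb
    obtain ⟨ξ, hξ, h⟩ := exists_mem_Ioo_slope_eq_of_hasDerivWithinAt hab fun x hx =>
      (hderiv x (hsub ⟨ha.trans hx.1, hx.2.trans hb⟩)).mono
        ((Icc_subset_Icc ha hb).trans hsub)
    exact ⟨ξ, ⟨ha.trans hξ.1.le, hξ.2.le.trans hb⟩, h⟩
  obtain ⟨A, hA, hfA⟩ := hslope z1 z2 le_rfl h12 (by linarith)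
  obtain ⟨B, hB, hfB⟩ := hslope z3 z4 (by linarith) h34 le_rfl
  obtain ⟨C, hC, hfC⟩ := hslope z1 z3 le_rfl (h12.trans h23) (by linarith)
  obtain ⟨D, hD, hfD⟩ := hslope z2 z4 (by linarith) (h23.trans h34) le_rfl
  rw [crDist_eq_slope f h12.ne (h12.trans h23).ne (h23.trans h34).ne h34.ne, hfA, hfB, hfC, hfD]
  have hB_le : |f' B| ≤ L := abs_le.2 ⟨by linarith [hlow B (hsub hB)], hup B (hsub hB)⟩
  calc _ ≤ 2 * L * (M * (z4 - z1) ^ α) / c1 ^ 2 :=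
        abs_mul_div_mul_sub_one_le hc1 (hlow C (hsub hC)) (hlow D (hsub hD)) hB_le
          (hup C (hsub hC)) (abs_sub_le_of_holder_of_mem_Icc hM hα.le hHolder hsub hA hC)
          (abs_sub_le_of_holder_of_mem_Icc hM hα.le hHolder hsub hB hD)
    _ = 2 * L * M / c1 ^ 2 * (z4 - z1) ^ α := by ring
    _ ≤ _ := mul_le_mul_of_nonneg_right (le_add_of_nonneg_right zero_le_one)
        (Real.rpow_nonneg (by linarith) _)

theorem cross_ratio_distortion_smooth_estimate
    (f f' : ℝ → ℝ) (u w : ℝ) (huw : u < w)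
    (hmono : StrictMonoOn f (Set.Icc u w))
    (α : ℝ) (hα : 0 < α)
    (c1 M : ℝ) (hc1 : 0 < c1) (hM : 0 ≤ M)
    (hderiv : ∀ x ∈ Set.Icc u w, HasDerivWithinAt f (f' x) (Set.Icc u w) x)
    (hlow : ∀ x ∈ Set.Icc u w, c1 ≤ f' x)
    (hHolder : ∀ x ∈ Set.Icc u w, ∀ y ∈ Set.Icc u w, |f' x - f' y| ≤ M * |x - y| ^ α) :
    ∃ K > 0, ∀ z1 z2 z3 z4 : ℝ,
      u ≤ z1 → z1 < z2 → z2 < z3 → z3 < z4 → z4 ≤ w →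
      |crDist z1 z2 z3 z4 f - 1| ≤ K * (z4 - z1) ^ α :=
  cross_ratio_distortion_smooth_estimate_general f f' u w huw α hα c1 M hc1 hM hderiv hlow hHolder
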